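/- arXiv:1906.10787 — 2 statements merged into one kernel-verified Lean document; each statement's English description precedes it below -/
import Mathlib

section
/- Let $r \ge 2$, let $p \ge 2$, let $A$ be a $(j,k)$-symmetric nonnegative $r$-matrix of order $n_1 \times \cdots \times n_r$ with $n = n_j = n_k$, and let $s = (s_1, \ldots, s_n)$ be a vector with entries in $\{-1, +1\}$. Define the $r$-matrix $B$ of order $n_1 \times \cdots \times n_r$ by $b_{i_1,\ldots,i_r} = a_{i_1,\ldots,i_r}\, s_{i_j} s_{i_k}$. Then $\|B\|_p = \max L_B(x^{(1)}, \ldots, x^{(r)})$, where the maximum is taken over all vectors $x^{(1)} \in \mathbb{R}^{n_1}, \ldots, x^{(r)} \in \mathbb{R}^{n_r}$ with $|x^{(1)}|_p = \cdots = |x^{(r)}|_p = 1$ and $x^{(j)} = x^{(k)}$. -/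
open Finset

/-- The `ℓ^p` norm of a vector in `ℝ^n`. -/
noncomputable def lpNorm {n : ℕ} (p : ℝ) (x : Fin n → ℝ) : ℝ :=
  (∑ i, |x i| ^ p) ^ (1 / p)

/-- The linear form of an `r`-matrix `A` of order `n 0 × ⋯ × n (r-1)`. -/
noncomputable def linForm {r : ℕ} {n : Fin r → ℕ} (A : (∀ t, Fin (n t)) → ℝ)
    (x : ∀ t, Fin (n t) → ℝ) : ℝ :=
  ∑ i : ∀ t, Fin (n t), A i * ∏ t, x t (i t)

/-- The index tuple obtained from `i` by swapping its `j`-th and `k`-th entries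
(given `n j = n k`). -/
def swapIdx {r : ℕ} {n : Fin r → ℕ} (j k : Fin r) (h : n j = n k)
    (i : ∀ t, Fin (n t)) : ∀ t, Fin (n t) := fun t =>
  if ht : t = j then Fin.cast (h.symm.trans (congrArg n ht).symm) (i k)
  else if ht' : t = k then Fin.cast (h.trans (congrArg n ht').symm) (i j)
  else i t

/-- The `p`-norm of an `r`-matrix. -/
noncomputable def hmNorm {r : ℕ} {n : Fin r → ℕ} (p : ℝ)
    (A : (∀ t, Fin (n t)) → ℝ) : ℝ :=
  sSup {v | ∃ x : ∀ t, Fin (n t) → ℝ, (∀ t, lpNorm p (x t) = 1) ∧ v = |linForm A x|}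

/-! ### Auxiliary lemmas -/

lemma aux_rpow_half_sq {a p : ℝ} (ha : 0 ≤ a) (hp : 0 < p) : (a * a) ^ (p/2) = a ^ p := by
  have : a * a = a ^ (2:ℝ) := by rw [Real.rpow_two]; ring
  rw [this, ← Real.rpow_mul ha, show (2:ℝ) * (p/2) = p by ring]

lemma aux_powMean2 {p : ℝ} (hp : 2 ≤ p) {x y : ℝ} (hx : 0 ≤ x) (hy : 0 ≤ y) :
    (x * x + y * y) / 2 ≤ ((x ^ p + y ^ p) / 2) ^ (1 / p) * ((x ^ p + y ^ p) / 2) ^ (1 / p) := by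
  have hp0 : (0:ℝ) < p := by linarith
  have hq : (1:ℝ) ≤ p / 2 := by linarith
  have hM : (0:ℝ) ≤ (x ^ p + y ^ p) / 2 := by positivity
  have h1 : ((1/2 * (x*x) + 1/2 * (y*y)) : ℝ) ^ (p/2) ≤ 1/2 * (x*x)^(p/2) + 1/2 * (y*y)^(p/2) := by
    have := Real.rpow_arith_mean_le_arith_mean_rpow (s := Finset.univ)
      ![(1:ℝ)/2, 1/2] ![x*x, y*y] (by intro i _; fin_cases i <;> norm_num)
      (by simp [Fin.sum_univ_two]; norm_num)
      (by intro i _; fin_cases i <;> simp <;> positivity) hq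
    simpa [Fin.sum_univ_two] using this
  rw [aux_rpow_half_sq hx hp0, aux_rpow_half_sq hy hp0] at h1
  have h2 : ((x*x + y*y)/2) ^ (p/2) ≤ (x ^ p + y ^ p) / 2 := by
    calc ((x*x + y*y)/2) ^ (p/2) = ((1/2 * (x*x) + 1/2 * (y*y))) ^ (p/2) := by ring_nf
    _ ≤ 1/2 * x^p + 1/2 * y^p := h1
    _ = (x ^ p + y ^ p) / 2 := by ring
  have h3 : (((x*x + y*y)/2) ^ (p/2)) ^ (2/p) ≤ ((x ^ p + y ^ p) / 2) ^ (2/p) :=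
    Real.rpow_le_rpow (by positivity) h2 (by positivity)
  have h4 : (((x*x + y*y)/2) ^ (p/2)) ^ (2/p) = (x*x + y*y)/2 := by
    rw [← Real.rpow_mul (by positivity), show p/2 * (2/p) = 1 by field_simp]
    exact Real.rpow_one _
  have h5 : ((x ^ p + y ^ p) / 2) ^ (2/p)
      = ((x ^ p + y ^ p) / 2) ^ (1 / p) * ((x ^ p + y ^ p) / 2) ^ (1 / p) := by
    rw [← Real.rpow_add' hM (by positivity), show (1:ℝ)/p + 1/p = 2/p by ring]
  rw [h4, h5] at h3
  exact h3

lemma aux_key4 {p : ℝ} (hp : 2 ≤ p) {x1 y1 x2 y2 : ℝ} (hx1 : 0 ≤ x1) (hy1 : 0 ≤ y1)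
    (hx2 : 0 ≤ x2) (hy2 : 0 ≤ y2) :
    x1 * y2 + x2 * y1 ≤
      2 * (((x1 ^ p + y1 ^ p) / 2) ^ (1 / p)) * (((x2 ^ p + y2 ^ p) / 2) ^ (1 / p)) := by
  set W1 := ((x1 ^ p + y1 ^ p) / 2) ^ (1 / p) with hW1def
  set W2 := ((x2 ^ p + y2 ^ p) / 2) ^ (1 / p) with hW2def
  have hW1 : (0:ℝ) ≤ W1 := by rw [hW1def]; positivity
  have hW2 : (0:ℝ) ≤ W2 := by rw [hW2def]; positivity
  have h1 := aux_powMean2 hp hx1 hy1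
  have h2 := aux_powMean2 hp hx2 hy2
  rw [← hW1def] at h1
  rw [← hW2def] at h2
  nlinarith [sq_nonneg (x1*x2 - y1*y2), sq_nonneg (x1*y2 - x2*y1), mul_nonneg hW1 hW2,
    mul_le_mul h1 h2 (by positivity) (by positivity),
    sq_nonneg (2*W1*W2 - (x1*y2 + x2*y1)), mul_nonneg (mul_nonneg hx1 hy2) (mul_nonneg hx2 hy1),
    sq_nonneg (W1 - W2), sq_nonneg (W1 + W2)]

variable {r : ℕ} {n : Fin r → ℕ}

lemma swapIdx_apply_j (j k : Fin r) (h : n j = n k) (i : ∀ t, Fin (n t)) :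
    swapIdx j k h i j = Fin.cast h.symm (i k) := by
  simp [swapIdx]

lemma swapIdx_apply_k (j k : Fin r) (hjk : j ≠ k) (h : n j = n k) (i : ∀ t, Fin (n t)) :
    swapIdx j k h i k = Fin.cast h (i j) := by
  have : ¬ (k = j) := fun e => hjk e.symm
  simp [swapIdx, this]

lemma swapIdx_apply_ne (j k : Fin r) (h : n j = n k) (i : ∀ t, Fin (n t)) {t : Fin r}
    (ht : t ≠ j) (ht' : t ≠ k) : swapIdx j k h i t = i t := by
  simp [swapIdx, ht, ht']

lemma swapIdx_invol (j k : Fin r) (hjk : j ≠ k) (h : n j = n k) (i : ∀ t, Fin (n t)) :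
    swapIdx j k h (swapIdx j k h i) = i := by
  funext t
  by_cases ht : t = j
  · subst ht
    rw [swapIdx_apply_j, swapIdx_apply_k _ _ hjk]
    exact Fin.ext (by simp)
  · by_cases ht' : t = k
    · subst ht'
      rw [swapIdx_apply_k _ _ hjk, swapIdx_apply_j]
      exact Fin.ext (by simp)
    · rw [swapIdx_apply_ne j k h _ ht ht', swapIdx_apply_ne j k h _ ht ht']

lemma aux_prod_split (j k : Fin r) (hjk : j ≠ k) (g : Fin r → ℝ) :
    ∏ t, g t = g j * (g k * ∏ t ∈ (univ.erase j).erase k, g t) := by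
  have hk : k ∈ univ.erase j := mem_erase.mpr ⟨fun e => hjk e.symm, mem_univ k⟩
  rw [← Finset.mul_prod_erase univ g (mem_univ j), ← Finset.mul_prod_erase _ g hk]

lemma aux_main_step (j k : Fin r) (hjk : j ≠ k) (h : n j = n k)
    (A : (∀ t, Fin (n t)) → ℝ) (hA : ∀ i, 0 ≤ A i)
    (hsym : ∀ i, A (swapIdx j k h i) = A i)
    (y : ∀ t, Fin (n t) → ℝ) (hy : ∀ t a, 0 ≤ y t a)
    (w : Fin (n j) → ℝ)
    (hw : ∀ a b : Fin (n j),
      y j a * y k (Fin.cast h b) + y j b * y k (Fin.cast h a) ≤ 2 * w a * w b) :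
    linForm A y ≤ linForm A
      (Function.update (Function.update y j w) k (fun b => w (Fin.cast h.symm b))) := by
  classical
  set z := Function.update (Function.update y j w) k (fun b => w (Fin.cast h.symm b)) with hz
  have hzj : z j = w := by
    rw [hz, Function.update_of_ne hjk, Function.update_self]
  have hzk : ∀ b, z k b = w (Fin.cast h.symm b) := by
    intro b; rw [hz, Function.update_self]
  have hzt : ∀ t, t ≠ j → t ≠ k → z t = y t := by
    intro t ht ht'
    rw [hz, Function.update_of_ne ht', Function.update_of_ne ht]
  set σ := swapIdx j k h with hσ
  have hsum : ∀ H : (∀ t, Fin (n t)) → ℝ, ∑ i, H (σ i) = ∑ i, H i := by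
    intro H
    exact Fintype.sum_equiv (Function.Involutive.toPerm σ (swapIdx_invol j k hjk h)) _ _
      (fun i => rfl)
  have key : ∀ i, A i * ∏ t, y t (i t) + A (σ i) * ∏ t, y t (σ i t)
      ≤ A i * ∏ t, z t (i t) + A (σ i) * ∏ t, z t (σ i t) := by
    intro i
    have hσj : σ i j = Fin.cast h.symm (i k) := swapIdx_apply_j j k h i
    have hσk : σ i k = Fin.cast h (i j) := swapIdx_apply_k j k hjk h i
    have hQ1 : ∏ t ∈ (univ.erase j).erase k, y t (σ i t)
        = ∏ t ∈ (univ.erase j).erase k, y t (i t) := by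
      refine prod_congr rfl fun t ht => ?_
      rw [mem_erase] at ht
      obtain ⟨htk, ht2⟩ := ht
      rw [mem_erase] at ht2
      rw [hσ, swapIdx_apply_ne j k h i ht2.1 htk]
    have hQ2 : ∏ t ∈ (univ.erase j).erase k, z t (i t)
        = ∏ t ∈ (univ.erase j).erase k, y t (i t) := by
      refine prod_congr rfl fun t ht => ?_
      rw [mem_erase] at ht
      obtain ⟨htk, ht2⟩ := ht
      rw [mem_erase] at ht2
      rw [hzt t ht2.1 htk]
    have hQ3 : ∏ t ∈ (univ.erase j).erase k, z t (σ i t)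
        = ∏ t ∈ (univ.erase j).erase k, y t (i t) := by
      rw [← hQ1]
      refine prod_congr rfl fun t ht => ?_
      rw [mem_erase] at ht
      obtain ⟨htk, ht2⟩ := ht
      rw [mem_erase] at ht2
      rw [hzt t ht2.1 htk]
    have hQnn : 0 ≤ ∏ t ∈ (univ.erase j).erase k, y t (i t) :=
      prod_nonneg fun t _ => hy t (i t)
    rw [aux_prod_split j k hjk (fun t => y t (i t)), aux_prod_split j k hjk (fun t => y t (σ i t)),
      aux_prod_split j k hjk (fun t => z t (i t)), aux_prod_split j k hjk (fun t => z t (σ i t))]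
    rw [hsym i, hQ1, hQ2, hQ3, hσj, hσk, hzj, hzk (i k), hzk (Fin.cast h (i j))]
    have e2 : Fin.cast h.symm (Fin.cast h (i j)) = i j := Fin.ext (by simp)
    have e3 : Fin.cast h (Fin.cast h.symm (i k)) = i k := Fin.ext (by simp)
    rw [e2]
    have hw' := hw (i j) (Fin.cast h.symm (i k))
    rw [e3] at hw'
    have hmain := mul_le_mul_of_nonneg_left hw' (mul_nonneg (hA i) hQnn)
    nlinarith [hmain]
  have hle : ∑ i, (A i * ∏ t, y t (i t) + A (σ i) * ∏ t, y t (σ i t))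
      ≤ ∑ i, (A i * ∏ t, z t (i t) + A (σ i) * ∏ t, z t (σ i t)) :=
    Finset.sum_le_sum fun i _ => key i
  rw [Finset.sum_add_distrib, Finset.sum_add_distrib,
    hsum (fun i => A i * ∏ t, y t (i t)), hsum (fun i => A i * ∏ t, z t (i t))] at hle
  have e1 : linForm A y = ∑ i, A i * ∏ t, y t (i t) := rfl
  have e2 : linForm A z = ∑ i, A i * ∏ t, z t (i t) := rfl
  rw [e1, e2]
  linarith

lemma aux_sum_rpow_eq_one {m : ℕ} {p : ℝ} (hp : 0 < p) {x : Fin m → ℝ}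
    (hx : lpNorm p x = 1) : ∑ i, |x i| ^ p = 1 := by
  have hS : 0 ≤ ∑ i, |x i| ^ p := sum_nonneg fun i _ => Real.rpow_nonneg (abs_nonneg _) _
  have h2 := congrArg (fun t : ℝ => t ^ p) hx
  simp only [lpNorm] at h2
  rwa [← Real.rpow_mul hS, one_div, inv_mul_cancel₀ (ne_of_gt hp), Real.rpow_one,
    Real.one_rpow] at h2

lemma aux_lpNorm_eq_one {m : ℕ} {p : ℝ} {x : Fin m → ℝ}
    (hx : ∑ i, |x i| ^ p = 1) : lpNorm p x = 1 := by
  rw [lpNorm, hx, Real.one_rpow]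

lemma aux_abs_le_one {m : ℕ} {p : ℝ} (hp : 0 < p) {x : Fin m → ℝ}
    (hx : ∑ i, |x i| ^ p = 1) (a : Fin m) : |x a| ≤ 1 := by
  have h1 : |x a| ^ p ≤ 1 := by
    rw [← hx]
    exact Finset.single_le_sum (fun i _ => Real.rpow_nonneg (abs_nonneg _) _) (mem_univ a)
  by_contra hc
  push_neg at hc
  have h2 : 1 < |x a| ^ p :=
    (Real.one_lt_rpow_iff_of_pos (lt_trans one_pos hc)).mpr (Or.inl ⟨hc, hp⟩)
  linarith

lemma aux_rpow_one_div_rpow {M p : ℝ} (hM : 0 ≤ M) (hp : 0 < p) : (M ^ (1/p)) ^ p = M := by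
  rw [← Real.rpow_mul hM, one_div, inv_mul_cancel₀ (ne_of_gt hp), Real.rpow_one]

/-- Let `A` be a `(j,k)`-symmetric nonnegative `r`-matrix (`r ≥ 2`, `p ≥ 2`), let `s` be a
`±1` vector of length `n = n_j = n_k`, and let `B` be given by
`b_{i₁,…,i_r} = a_{i₁,…,i_r} s_{i_j} s_{i_k}`. Then `‖B‖_p` equals the maximum of
`L_B(x⁽¹⁾,…,x⁽ʳ⁾)` over unit vectors with `x⁽ʲ⁾ = x⁽ᵏ⁾`. -/
theorem pNorm_of_signed_matrix {r : ℕ} (hr : 2 ≤ r) {p : ℝ} (hp : 2 ≤ p)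
    {n : Fin r → ℕ} (j k : Fin r) (hjk : j ≠ k) (h : n j = n k)
    (A : (∀ t, Fin (n t)) → ℝ) (hA : ∀ i, 0 ≤ A i)
    (hsym : ∀ i, A (swapIdx j k h i) = A i)
    (s : Fin (n j) → ℝ) (hs : ∀ a, s a = 1 ∨ s a = -1)
    (B : (∀ t, Fin (n t)) → ℝ)
    (hB : ∀ i, B i = A i * s (i j) * s (Fin.cast h.symm (i k))) :
    hmNorm p B = sSup {v | ∃ x : ∀ t, Fin (n t) → ℝ,
      (∀ t, lpNorm p (x t) = 1) ∧ (∀ a : Fin (n j), x j a = x k (Fin.cast h a)) ∧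
      v = linForm B x} := by
  classical
  have hp0 : (0:ℝ) < p := by linarith
  have hss : ∀ a, s a * s a = 1 := by intro a; rcases hs a with e|e <;> rw [e] <;> norm_num
  have habs : ∀ a, |s a| = 1 := by intro a; rcases hs a with e|e <;> rw [e] <;> norm_num
  have hBabs : ∀ i, |B i| = A i := by
    intro i
    rw [hB i, abs_mul, abs_mul, habs, habs, abs_of_nonneg (hA i), mul_one, mul_one]
  rw [hmNorm]
  set S1 := {v | ∃ x : ∀ t, Fin (n t) → ℝ, (∀ t, lpNorm p (x t) = 1) ∧ v = |linForm B x|}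
    with hS1
  set S2 := {v | ∃ x : ∀ t, Fin (n t) → ℝ,
      (∀ t, lpNorm p (x t) = 1) ∧ (∀ a : Fin (n j), x j a = x k (Fin.cast h a)) ∧
      v = linForm B x} with hS2
  -- uniform bound
  have hbound : ∀ (x : ∀ t, Fin (n t) → ℝ), (∀ t, lpNorm p (x t) = 1) →
      |linForm B x| ≤ ∑ i : ∀ t, Fin (n t), |B i| := by
    intro x hx
    have hx1 : ∀ t a, |x t a| ≤ 1 := fun t a =>
      aux_abs_le_one hp0 (aux_sum_rpow_eq_one hp0 (hx t)) a
    calc |linForm B x| ≤ ∑ i : ∀ t, Fin (n t), |B i * ∏ t, x t (i t)| :=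
          Finset.abs_sum_le_sum_abs _ _
    _ = ∑ i : ∀ t, Fin (n t), |B i| * ∏ t, |x t (i t)| := by
        refine sum_congr rfl fun i _ => ?_
        rw [abs_mul, Finset.abs_prod]
    _ ≤ ∑ i : ∀ t, Fin (n t), |B i| * 1 := by
        refine sum_le_sum fun i _ => ?_
        exact mul_le_mul_of_nonneg_left
          (Finset.prod_le_one (fun t _ => abs_nonneg _) (fun t _ => hx1 t (i t)))
          (abs_nonneg _)
    _ = ∑ i : ∀ t, Fin (n t), |B i| := by simp
  have hb1 : ∀ v ∈ S1, v ≤ ∑ i : ∀ t, Fin (n t), |B i| := by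
    rintro v ⟨x, hx, rfl⟩
    exact hbound x hx
  have hb2 : ∀ v ∈ S2, v ≤ ∑ i : ∀ t, Fin (n t), |B i| := by
    rintro v ⟨x, hx, -, rfl⟩
    exact le_trans (le_abs_self _) (hbound x hx)
  -- main claim
  have claim : ∀ v ∈ S1, ∃ v' ∈ S2, v ≤ v' := by
    rintro v ⟨x, hx, rfl⟩
    set y : ∀ t, Fin (n t) → ℝ := fun t b => |x t b| with hydef
    have hynn : ∀ t a, 0 ≤ y t a := fun t a => abs_nonneg _
    have hysum : ∀ t, ∑ a, y t a ^ p = 1 := by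
      intro t
      have := aux_sum_rpow_eq_one hp0 (hx t)
      simpa [hydef] using this
    set w : Fin (n j) → ℝ :=
      fun a => ((y j a ^ p + y k (Fin.cast h a) ^ p)/2) ^ (1/p) with hwdef
    have hwM : ∀ a : Fin (n j), (0:ℝ) ≤ (y j a ^ p + y k (Fin.cast h a) ^ p)/2 := by
      intro a
      have := Real.rpow_nonneg (hynn j a) p
      have := Real.rpow_nonneg (hynn k (Fin.cast h a)) p
      positivity
    have hwnn : ∀ a, 0 ≤ w a := fun a => Real.rpow_nonneg (hwM a) _
    have hwp : ∀ a, w a ^ p = (y j a ^ p + y k (Fin.cast h a) ^ p)/2 := fun a =>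
      aux_rpow_one_div_rpow (hwM a) hp0
    have hwsum : ∑ a, w a ^ p = 1 := by
      have hsum2 : ∑ a : Fin (n j), y k (Fin.cast h a) ^ p = 1 := by
        rw [← hysum k]
        exact Fintype.sum_equiv (finCongr h) _ _ (fun a => rfl)
      calc ∑ a, w a ^ p = ∑ a, (y j a ^ p + y k (Fin.cast h a) ^ p)/2 := by
            exact sum_congr rfl fun a _ => hwp a
      _ = ((∑ a, y j a ^ p) + ∑ a : Fin (n j), y k (Fin.cast h a) ^ p)/2 := by
            rw [← Finset.sum_add_distrib, ← Finset.sum_div]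
      _ = 1 := by rw [hysum j, hsum2]; norm_num
    have hw : ∀ a b : Fin (n j),
        y j a * y k (Fin.cast h b) + y j b * y k (Fin.cast h a) ≤ 2 * w a * w b := by
      intro a b
      have := aux_key4 hp (hynn j a) (hynn k (Fin.cast h a)) (hynn j b) (hynn k (Fin.cast h b))
      calc y j a * y k (Fin.cast h b) + y j b * y k (Fin.cast h a) ≤
          2 * (((y j a ^ p + y k (Fin.cast h a) ^ p) / 2) ^ (1 / p)) *
            (((y j b ^ p + y k (Fin.cast h b) ^ p) / 2) ^ (1 / p)) := this
      _ = 2 * w a * w b := by rw [hwdef]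
    have hstep := aux_main_step j k hjk h A hA hsym y hynn w hw
    -- |L_B x| ≤ L_A y
    have h1 : |linForm B x| ≤ linForm A y := by
      calc |linForm B x| ≤ ∑ i : ∀ t, Fin (n t), |B i * ∏ t, x t (i t)| :=
            Finset.abs_sum_le_sum_abs _ _
      _ = ∑ i : ∀ t, Fin (n t), A i * ∏ t, y t (i t) := by
          refine sum_congr rfl fun i _ => ?_
          rw [abs_mul, Finset.abs_prod, hBabs i]
      _ = linForm A y := rfl
    -- the candidate vector
    set z : ∀ t, Fin (n t) → ℝ :=
      Function.update (Function.update y j (fun a => s a * w a)) k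
        (fun b => s (Fin.cast h.symm b) * w (Fin.cast h.symm b)) with hzdef
    have hzj : ∀ a, z j a = s a * w a := by
      intro a; rw [hzdef, Function.update_of_ne hjk, Function.update_self]
    have hzk : ∀ b, z k b = s (Fin.cast h.symm b) * w (Fin.cast h.symm b) := by
      intro b; rw [hzdef, Function.update_self]
    have hzt : ∀ t, t ≠ j → t ≠ k → z t = y t := by
      intro t ht ht'
      rw [hzdef, Function.update_of_ne ht', Function.update_of_ne ht]
    set zA : ∀ t, Fin (n t) → ℝ :=
      Function.update (Function.update y j w) k (fun b => w (Fin.cast h.symm b)) with hzAdef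
    have hzAj : zA j = w := by
      rw [hzAdef, Function.update_of_ne hjk, Function.update_self]
    have hzAk : ∀ b, zA k b = w (Fin.cast h.symm b) := by
      intro b; rw [hzAdef, Function.update_self]
    have hzAt : ∀ t, t ≠ j → t ≠ k → zA t = y t := by
      intro t ht ht'
      rw [hzAdef, Function.update_of_ne ht', Function.update_of_ne ht]
    -- L_B z = L_A zA
    have h2 : linForm B z = linForm A zA := by
      rw [linForm, linForm]
      refine sum_congr rfl fun i _ => ?_
      rw [aux_prod_split j k hjk (fun t => z t (i t)),
        aux_prod_split j k hjk (fun t => zA t (i t))]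
      have hQ : ∏ t ∈ (univ.erase j).erase k, z t (i t)
          = ∏ t ∈ (univ.erase j).erase k, zA t (i t) := by
        refine prod_congr rfl fun t ht => ?_
        rw [mem_erase] at ht
        obtain ⟨htk, ht2⟩ := ht
        rw [mem_erase] at ht2
        rw [hzt t ht2.1 htk, hzAt t ht2.1 htk]
      rw [hQ, hzj (i j), hzk (i k), hzAj, hzAk (i k), hB i]
      have e1 : A i * s (i j) * s (Fin.cast h.symm (i k)) *
          (s (i j) * w (i j) * (s (Fin.cast h.symm (i k)) * w (Fin.cast h.symm (i k)) *
            ∏ t ∈ (univ.erase j).erase k, zA t (i t)))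
          = A i * ((s (i j) * s (i j)) * ((s (Fin.cast h.symm (i k)) * s (Fin.cast h.symm (i k)))
            * (w (i j) * (w (Fin.cast h.symm (i k)) *
              ∏ t ∈ (univ.erase j).erase k, zA t (i t))))) := by ring
      rw [e1, hss (i j), hss (Fin.cast h.symm (i k)), one_mul, one_mul]
    -- norms of z
    have hznorm : ∀ t, lpNorm p (z t) = 1 := by
      intro t
      by_cases ht : t = j
      · subst ht
        refine aux_lpNorm_eq_one ?_
        calc ∑ a, |z t a| ^ p = ∑ a, w a ^ p := by
              refine sum_congr rfl fun a _ => ?_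
              rw [hzj a, abs_mul, habs a, one_mul, abs_of_nonneg (hwnn a)]
        _ = 1 := hwsum
      · by_cases ht' : t = k
        · subst ht'
          refine aux_lpNorm_eq_one ?_
          calc ∑ b, |z t b| ^ p = ∑ b : Fin (n t), w (Fin.cast h.symm b) ^ p := by
                refine sum_congr rfl fun b _ => ?_
                rw [hzk b, abs_mul, habs, one_mul, abs_of_nonneg (hwnn _)]
          _ = ∑ a, w a ^ p := Fintype.sum_equiv (finCongr h.symm) _ _ (fun b => rfl)
          _ = 1 := hwsum
        · rw [hzt t ht ht']
          refine aux_lpNorm_eq_one ?_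
          calc ∑ a, |y t a| ^ p = ∑ a, y t a ^ p := by
                refine sum_congr rfl fun a _ => ?_
                rw [abs_of_nonneg (hynn t a)]
          _ = 1 := hysum t
    -- constraint
    have hcompat : ∀ a : Fin (n j), z j a = z k (Fin.cast h a) := by
      intro a
      rw [hzj a, hzk (Fin.cast h a)]
      have e : Fin.cast h.symm (Fin.cast h a) = a := Fin.ext (by simp)
      rw [e]
    refine ⟨linForm B z, ⟨z, hznorm, hcompat, rfl⟩, ?_⟩
    calc |linForm B x| ≤ linForm A y := h1
    _ ≤ linForm A zA := hstep
    _ = linForm B z := h2.symm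
  have claim2 : ∀ v ∈ S2, ∃ v' ∈ S1, v ≤ v' := by
    rintro v ⟨x, hx, -, rfl⟩
    exact ⟨|linForm B x|, ⟨x, hx, rfl⟩, le_abs_self _⟩
  by_cases hne : S1.Nonempty
  · obtain ⟨v0, hv0⟩ := hne
    obtain ⟨v1, hv1, -⟩ := claim v0 hv0
    apply le_antisymm
    · refine csSup_le ⟨v0, hv0⟩ fun v hv => ?_
      obtain ⟨v', hv', hle⟩ := claim v hv
      exact hle.trans (le_csSup ⟨∑ i : ∀ t, Fin (n t), |B i|, fun u hu => hb2 u hu⟩ hv')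
    · refine csSup_le ⟨v1, hv1⟩ fun v hv => ?_
      obtain ⟨v', hv', hle⟩ := claim2 v hv
      exact hle.trans (le_csSup ⟨∑ i : ∀ t, Fin (n t), |B i|, fun u hu => hb1 u hu⟩ hv')
  · have hS1e : S1 = ∅ := Set.not_nonempty_iff_eq_empty.mp hne
    have hS2e : S2 = ∅ := by
      rcases Set.eq_empty_or_nonempty S2 with e | ⟨v, hv⟩
      · exact e
      · obtain ⟨v', hv', -⟩ := claim2 v hv
        exact absurd ⟨v', hv'⟩ hne
    rw [hS1e, hS2e]
end

section
/- Let $r \ge 2$, let $p \ge 2$, and let $A$ be a symmetric nonnegative $r$-matrix of order $n$ with slice-sums $S_1, \ldots, S_n$. Then $\rho^{(p)}(A) \ge n^{1 - r/p} \left( \frac{1}{n} \left( S_1^{p/(p-1)} + \cdots + S_n^{p/(p-1)} \right) \right)^{(p-1)/p}$. -/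
open Finset

/-- The linear form of a cubical `r`-matrix `A` of order `n`. -/
noncomputable def linFormC {r n : ℕ} (A : (Fin r → Fin n) → ℝ)
    (x : Fin r → Fin n → ℝ) : ℝ :=
  ∑ i : Fin r → Fin n, A i * ∏ t, x t (i t)

/-- The `p`-spectral radius of a cubical `r`-matrix:
`ρ⁽ᵖ⁾(A) = max_{|x|_p = 1} |L_A(x, …, x)|`. -/
noncomputable def pSpecRad {r n : ℕ} (p : ℝ) (A : (Fin r → Fin n) → ℝ) : ℝ :=
  sSup {v | ∃ x : Fin n → ℝ, lpNorm p x = 1 ∧ v = |linFormC A (fun _ => x)|}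

/-- The slice-sums of a cubical `r`-matrix:
`S_a = ∑_{i₂,…,i_r} a_{a,i₂,…,i_r}`. -/
noncomputable def sliceSum {r n : ℕ} (hr : 0 < r) (A : (Fin r → Fin n) → ℝ)
    (a : Fin n) : ℝ :=
  ∑ i : Fin r → Fin n, if i ⟨0, hr⟩ = a then A i else 0

/-!
Put `q = p / (p - 1)`, `T = ∑ Sₐ^q`, let `P = (Sₐ^q / T)ₐ` and let `W` be the uniform
distribution. With `P^{1/p}` in the first slot and `W^{1/p}` in the others the linear form equals
`n^{-(r-1)/p} ∑ Sₐ Pₐ^{1/p} = n^{-(r-1)/p} T^{(p-1)/p}`, the claimed bound (the equality case of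
Hölder's inequality). Since `(u, v) ↦ (uv)^{1/p}` is concave for `p ≥ 2`, replacing the profiles
`U, V` in two slots of a symmetric nonnegative form by `θU + (1-θ)V` and `θV + (1-θ)U` does not
decrease it. `r - 1` such moves turn the tuple into `r` copies of `y = ((P + (r-1)W)/r)^{1/p}`,
a unit vector, so the bound is at most `L_A(y, …, y) ≤ ρ⁽ᵖ⁾(A)`.
-/

theorem concaveOn_sqrt_mul : ConcaveOn ℝ (Set.Ici 0) fun z : ℝ × ℝ => √(z.1 * z.2) := by
  refine ⟨convex_Ici 0, ?_⟩
  rintro ⟨a, c⟩ hac ⟨b, d⟩ hbd θ μ hθ hμ hθμ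
  obtain ⟨ha, hc⟩ : (0 : ℝ) ≤ a ∧ (0 : ℝ) ≤ c := hac
  obtain ⟨hb, hd⟩ : (0 : ℝ) ≤ b ∧ (0 : ℝ) ≤ d := hbd
  simp only [smul_eq_mul, Prod.smul_mk, Prod.mk_add_mk]
  have hcross : 2 * (√(a * c) * √(b * d)) ≤ a * d + b * c := by
    have h : √(a * c) * √(b * d) = √(a * d) * √(b * c) := by
      rw [← Real.sqrt_mul (by positivity), ← Real.sqrt_mul (by positivity)]; ring_nf
    rw [h]
    nlinarith [sq_nonneg (√(a * d) - √(b * c)), Real.sq_sqrt (mul_nonneg ha hd),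
      Real.sq_sqrt (mul_nonneg hb hc)]
  apply Real.le_sqrt_of_sq_le
  calc (θ * √(a * c) + μ * √(b * d)) ^ 2
      = θ ^ 2 * (a * c) + μ ^ 2 * (b * d) + θ * μ * (2 * (√(a * c) * √(b * d))) := by
        linear_combination θ ^ 2 * Real.sq_sqrt (mul_nonneg ha hc)
          + μ ^ 2 * Real.sq_sqrt (mul_nonneg hb hd)
    _ ≤ θ ^ 2 * (a * c) + μ ^ 2 * (b * d) + θ * μ * (a * d + b * c) := by gcongr
    _ = (θ * a + μ * b) * (θ * c + μ * d) := by ring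

theorem concaveOn_mul_rpow {q : ℝ} (hq₀ : 0 ≤ q) (hq : q ≤ 1 / 2) :
    ConcaveOn ℝ (Set.Ici 0) fun z : ℝ × ℝ => (z.1 * z.2) ^ q := by
  have hsq : ∀ z : ℝ × ℝ, z ∈ Set.Ici 0 → (z.1 * z.2) ^ q = √(z.1 * z.2) ^ (2 * q) := by
    rintro ⟨x, y⟩ ⟨hx, hy⟩
    rw [Real.sqrt_eq_rpow, ← Real.rpow_mul (mul_nonneg hx hy)]
    ring_nf
  refine ⟨convex_Ici 0, fun z hz w hw θ μ hθ hμ hθμ => ?_⟩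
  have hzw : θ • z + μ • w ∈ Set.Ici 0 := (convex_Ici 0) hz hw hθ hμ hθμ
  simp only [smul_eq_mul, hsq z hz, hsq w hw, hsq _ hzw]
  calc θ * √(z.1 * z.2) ^ (2 * q) + μ * √(w.1 * w.2) ^ (2 * q)
      ≤ (θ * √(z.1 * z.2) + μ * √(w.1 * w.2)) ^ (2 * q) := by
        simpa using (Real.concaveOn_rpow (by linarith) (by linarith)).2
          (Real.sqrt_nonneg _) (Real.sqrt_nonneg _) hθ hμ hθμ
    _ ≤ √((θ • z + μ • w).1 * (θ • z + μ • w).2) ^ (2 * q) := by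
        gcongr
        simpa using concaveOn_sqrt_mul.2 hz hw hθ hμ hθμ

theorem rpow_mul_rpow_add_le_of_mix {p : ℝ} (hp : 2 ≤ p) {θ : ℝ} (hθ₀ : 0 ≤ θ) (hθ₁ : θ ≤ 1)
    {u v u' v' : ℝ} (hu : 0 ≤ u) (hv : 0 ≤ v) (hu' : 0 ≤ u') (hv' : 0 ≤ v') :
    u ^ p⁻¹ * v' ^ p⁻¹ + u' ^ p⁻¹ * v ^ p⁻¹ ≤
      (θ * u + (1 - θ) * v) ^ p⁻¹ * (θ * v' + (1 - θ) * u') ^ p⁻¹ +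
        (θ * u' + (1 - θ) * v') ^ p⁻¹ * (θ * v + (1 - θ) * u) ^ p⁻¹ := by
  have hq : p⁻¹ ≤ 1 / 2 := by rw [one_div]; exact inv_anti₀ two_pos hp
  have hconc := concaveOn_mul_rpow (inv_nonneg.2 (by linarith)) hq
  have h₁ := hconc.2 (show (0 : ℝ × ℝ) ≤ (u, v') from ⟨hu, hv'⟩)
    (show (0 : ℝ × ℝ) ≤ (v, u') from ⟨hv, hu'⟩) hθ₀ (sub_nonneg.2 hθ₁) (add_sub_cancel θ 1)
  have h₂ := hconc.2 (show (0 : ℝ × ℝ) ≤ (u', v) from ⟨hu', hv⟩)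
    (show (0 : ℝ × ℝ) ≤ (v', u) from ⟨hv', hu⟩) hθ₀ (sub_nonneg.2 hθ₁) (add_sub_cancel θ 1)
  simp only [smul_eq_mul, Prod.smul_mk, Prod.mk_add_mk] at h₁ h₂
  rw [← Real.mul_rpow hu hv', ← Real.mul_rpow hu' hv,
    ← Real.mul_rpow (by nlinarith) (by nlinarith), ← Real.mul_rpow (by nlinarith) (by nlinarith)]
  rw [mul_comm v u'] at h₁
  rw [mul_comm v' u] at h₂
  linarith

section SpectralRadius

variable {r n : ℕ} {p : ℝ}

theorem lpNorm_eq_one_iff (hp : 0 < p) (x : Fin n → ℝ) :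
    lpNorm p x = 1 ↔ ∑ i, |x i| ^ p = 1 := by
  rw [lpNorm, one_div, Real.rpow_inv_eq (by positivity) zero_le_one hp.ne', Real.one_rpow]

theorem abs_le_one_of_lpNorm_eq_one (hp : 0 < p) {x : Fin n → ℝ} (hx : lpNorm p x = 1)
    (a : Fin n) : |x a| ≤ 1 := by
  rw [lpNorm_eq_one_iff hp] at hx
  have hxa : |x a| ^ p ≤ 1 ^ p := by
    rw [Real.one_rpow, ← hx]
    exact single_le_sum (f := fun i => |x i| ^ p) (fun i _ => by positivity) (mem_univ a)
  exact (Real.rpow_le_rpow_iff (abs_nonneg _) zero_le_one hp).1 hxa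

theorem abs_linFormC_le (A : (Fin r → Fin n) → ℝ) {x : Fin n → ℝ} (hx : ∀ a, |x a| ≤ 1) :
    |linFormC A (fun _ => x)| ≤ ∑ i, |A i| := by
  refine (abs_sum_le_sum_abs _ _).trans (sum_le_sum fun i _ => ?_)
  rw [abs_mul, abs_prod]
  exact mul_le_of_le_one_right (abs_nonneg _)
    (prod_le_one (fun _ _ => abs_nonneg _) fun t _ => hx (i t))

theorem abs_linFormC_le_pSpecRad (hp : 0 < p) (A : (Fin r → Fin n) → ℝ) {x : Fin n → ℝ}
    (hx : lpNorm p x = 1) : |linFormC A (fun _ => x)| ≤ pSpecRad p A := by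
  refine le_csSup ⟨∑ i, |A i|, ?_⟩ ⟨x, hx, rfl⟩
  rintro _ ⟨y, hy, rfl⟩
  exact abs_linFormC_le A (abs_le_one_of_lpNorm_eq_one hp hy)

theorem pSpecRad_nonneg (A : (Fin r → Fin n) → ℝ) : 0 ≤ pSpecRad p A :=
  Real.sSup_nonneg (by rintro _ ⟨x, -, rfl⟩; exact abs_nonneg _)

theorem lpNorm_rpow_inv_eq_one (hp : 0 < p) {P : Fin n → ℝ} (hP : ∀ a, 0 ≤ P a)
    (hP1 : ∑ a, P a = 1) : lpNorm p (fun a => P a ^ p⁻¹) = 1 := by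
  rw [lpNorm_eq_one_iff hp, ← hP1]
  refine sum_congr rfl fun a _ => ?_
  rw [abs_of_nonneg (Real.rpow_nonneg (hP a) _), ← Real.rpow_mul (hP a), inv_mul_cancel₀ hp.ne',
    Real.rpow_one]

end SpectralRadius

section Smoothing

variable {r n : ℕ} {A : (Fin r → Fin n) → ℝ}

theorem linFormC_comp_perm (hsym : ∀ (σ : Equiv.Perm (Fin r)) (i : Fin r → Fin n), A (i ∘ σ) = A i)
    (X : Fin r → Fin n → ℝ) (σ : Equiv.Perm (Fin r)) : linFormC A (X ∘ σ) = linFormC A X := by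
  refine Fintype.sum_equiv (Equiv.arrowCongr σ (Equiv.refl _)) _ _ fun i => ?_
  have hi : i = (i ∘ σ.symm) ∘ σ := by ext; simp
  conv_lhs => rw [hi, hsym]
  congr 1
  exact Equiv.prod_comp σ fun τ => X τ (i (σ.symm τ))

theorem linFormC_eq_sum_mul_prod_erase {s t : Fin r} (hst : s ≠ t) (X : Fin r → Fin n → ℝ) :
    linFormC A X = ∑ i, A i * (X s (i s) * X t (i t)) *
      ∏ τ ∈ (univ.erase s).erase t, X τ (i τ) := by
  refine sum_congr rfl fun i _ => ?_
  rw [← mul_prod_erase _ _ (mem_univ s),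
    ← mul_prod_erase _ _ (mem_erase.2 ⟨hst.symm, mem_univ t⟩)]
  ring

theorem linFormC_le_of_pair (hA : ∀ i, 0 ≤ A i)
    (hsym : ∀ (σ : Equiv.Perm (Fin r)) (i : Fin r → Fin n), A (i ∘ σ) = A i)
    {s t : Fin r} (hst : s ≠ t) {X Y : Fin r → Fin n → ℝ}
    (hXY : ∀ τ, τ ≠ s → τ ≠ t → Y τ = X τ) (hX : ∀ τ, τ ≠ s → τ ≠ t → ∀ a, 0 ≤ X τ a)
    (hpair : ∀ a b, X s a * X t b + X s b * X t a ≤ Y s a * Y t b + Y s b * Y t a) :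
    linFormC A X ≤ linFormC A Y := by
  set R : (Fin r → Fin n) → ℝ := fun i => ∏ τ ∈ (univ.erase s).erase t, X τ (i τ)
  have hR : ∀ i, 0 ≤ R i := fun i => prod_nonneg fun τ hτ =>
    hX τ (ne_of_mem_erase (mem_of_mem_erase hτ)) (ne_of_mem_erase hτ) _
  have hsplit : ∀ Z : Fin r → Fin n → ℝ, (∀ τ, τ ≠ s → τ ≠ t → Z τ = X τ) →
      2 * linFormC A Z = ∑ i, A i * R i * (Z s (i s) * Z t (i t) + Z s (i t) * Z t (i s)) := by
    -- `L_A(Z) = L_A(Z ∘ swap s t)` by symmetry, and the two expansions add up to this sum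
    intro Z hZ
    have hR' : ∀ i, ∏ τ ∈ (univ.erase s).erase t, Z τ (i τ) = R i := fun i =>
      prod_congr rfl fun τ hτ => by
        rw [hZ τ (ne_of_mem_erase (mem_of_mem_erase hτ)) (ne_of_mem_erase hτ)]
    have hswap : ∀ i, ∏ τ ∈ (univ.erase s).erase t, Z (Equiv.swap s t τ) (i τ) = R i :=
      fun i => (prod_congr rfl fun τ hτ => by
        rw [Equiv.swap_apply_of_ne_of_ne
          (ne_of_mem_erase (mem_of_mem_erase hτ)) (ne_of_mem_erase hτ)]).trans (hR' i)
    rw [two_mul]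
    nth_rw 2 [← linFormC_comp_perm hsym Z (Equiv.swap s t)]
    rw [linFormC_eq_sum_mul_prod_erase hst, linFormC_eq_sum_mul_prod_erase hst,
      ← sum_add_distrib]
    refine sum_congr rfl fun i _ => ?_
    simp only [Function.comp_apply, hR', hswap, Equiv.swap_apply_left, Equiv.swap_apply_right]
    ring
  have h2 : 2 * linFormC A X ≤ 2 * linFormC A Y := by
    rw [hsplit X fun _ _ _ => rfl, hsplit Y hXY]
    exact sum_le_sum fun i _ =>
      mul_le_mul_of_nonneg_left (hpair (i s) (i t)) (mul_nonneg (hA i) (hR i))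
  linarith

end Smoothing

section Interpolation

variable {r n : ℕ}

noncomputable def mixRoots (p : ℝ) (P W : Fin n → ℝ) (c : Fin r → ℝ) : Fin r → Fin n → ℝ :=
  fun t a => (c t * P a + (1 - c t) * W a) ^ p⁻¹

variable {p : ℝ} {A : (Fin r → Fin n) → ℝ} {P W : Fin n → ℝ}

theorem mix_nonneg (hP : ∀ a, 0 ≤ P a) (hW : ∀ a, 0 ≤ W a) {γ : ℝ} (hγ : γ ∈ Set.Icc 0 1)
    (a : Fin n) : 0 ≤ γ * P a + (1 - γ) * W a :=
  add_nonneg (mul_nonneg hγ.1 (hP a)) (mul_nonneg (sub_nonneg.2 hγ.2) (hW a))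

theorem sum_mix_eq_one (hP : ∑ a, P a = 1) (hW : ∑ a, W a = 1) (γ : ℝ) :
    ∑ a, (γ * P a + (1 - γ) * W a) = 1 := by
  rw [sum_add_distrib, ← mul_sum, ← mul_sum, hP, hW]
  ring

theorem mixRoots_ite_zero (w : ℝ) :
    mixRoots p P (fun _ => w) (fun t : Fin r => if (t : ℕ) = 0 then 1 else 0) =
      fun t : Fin r => if (t : ℕ) = 0 then (fun a => P a ^ p⁻¹) else fun _ => w ^ p⁻¹ := by
  ext t a
  split_ifs with ht <;> simp [mixRoots, ht]

theorem linFormC_mixRoots_le_of_mix (hA : ∀ i, 0 ≤ A i)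
    (hsym : ∀ (σ : Equiv.Perm (Fin r)) (i : Fin r → Fin n), A (i ∘ σ) = A i) (hp : 2 ≤ p)
    (hP : ∀ a, 0 ≤ P a) (hW : ∀ a, 0 ≤ W a) {c c' : Fin r → ℝ}
    (hc : ∀ t, c t ∈ Set.Icc 0 1) {s t : Fin r} (hst : s ≠ t) {θ : ℝ} (hθ : θ ∈ Set.Icc 0 1)
    (hc's : c' s = θ * c s + (1 - θ) * c t) (hc't : c' t = θ * c t + (1 - θ) * c s)
    (hc' : ∀ τ, τ ≠ s → τ ≠ t → c' τ = c τ) :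
    linFormC A (mixRoots p P W c) ≤ linFormC A (mixRoots p P W c') := by
  refine linFormC_le_of_pair hA hsym hst
    (fun τ hτs hτt => by ext a; simp only [mixRoots, hc' τ hτs hτt])
    (fun τ _ _ a => Real.rpow_nonneg (mix_nonneg hP hW (hc τ) a) _) fun a b => ?_
  have hmix : ∀ (τ τ' : Fin r) (x : Fin n), (θ * c τ + (1 - θ) * c τ') * P x +
      (1 - (θ * c τ + (1 - θ) * c τ')) * W x =
      θ * (c τ * P x + (1 - c τ) * W x) + (1 - θ) * (c τ' * P x + (1 - c τ') * W x) :=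
    fun _ _ _ => by ring
  simp only [mixRoots, hc's, hc't, hmix]
  exact rpow_mul_rpow_add_le_of_mix hp hθ.1 hθ.2 (mix_nonneg hP hW (hc s) a)
    (mix_nonneg hP hW (hc t) a) (mix_nonneg hP hW (hc s) b)
    (mix_nonneg hP hW (hc t) b)

theorem linFormC_mixRoots_le_uniform (hA : ∀ i, 0 ≤ A i)
    (hsym : ∀ (σ : Equiv.Perm (Fin r)) (i : Fin r → Fin n), A (i ∘ σ) = A i) (hp : 2 ≤ p)
    (hP : ∀ a, 0 ≤ P a) (hW : ∀ a, 0 ≤ W a) :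
    linFormC A (mixRoots p P W fun t => if (t : ℕ) = 0 then 1 else 0) ≤
      linFormC A (mixRoots p P W fun _ => (r : ℝ)⁻¹) := by
  obtain rfl | hr := r.eq_zero_or_pos
  · exact (congrArg _ (Subsingleton.elim _ _)).le
  have hr' : (0 : ℝ) < r := Nat.cast_pos.2 hr
  -- after `k` steps, slot `0` has handed the weight `1 / r` on to each of the slots `1, …, k`
  let c : ℕ → Fin r → ℝ := fun k t =>
    if (t : ℕ) = 0 then (r - k) / r else if (t : ℕ) ≤ k then (r : ℝ)⁻¹ else 0
  have hc : ∀ k, k < r → ∀ t, c k t ∈ Set.Icc 0 1 := by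
    intro k hk t
    have hkr : (k : ℝ) < r := Nat.cast_lt.2 hk
    simp only [c]
    split_ifs
    · exact ⟨div_nonneg (by linarith) hr'.le,
        (div_le_one hr').2 (by linarith [k.cast_nonneg (α := ℝ)])⟩
    · exact ⟨inv_nonneg.2 hr'.le, inv_le_one_of_one_le₀ (Nat.one_le_cast.2 hr)⟩
    · exact ⟨le_rfl, zero_le_one⟩
  have hstep : ∀ k, k + 1 < r →
      linFormC A (mixRoots p P W (c k)) ≤ linFormC A (mixRoots p P W (c (k + 1))) := by
    intro k hk
    have hk' : (k : ℝ) + 1 < r := by exact_mod_cast hk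
    have hrk : (0 : ℝ) < r - k := by linarith
    refine linFormC_mixRoots_le_of_mix hA hsym hp hP hW (hc k (by omega))
      (s := ⟨0, hr⟩) (t := ⟨k + 1, hk⟩) (by simp [Fin.ext_iff]) (θ := (r - k - 1) / (r - k))
      ⟨div_nonneg (by linarith) hrk.le, (div_le_one hrk).2 (by linarith)⟩ ?_ ?_ ?_
    · simp only [c, if_true, Nat.cast_succ, Nat.succ_ne_zero, if_false, Nat.not_succ_le_self]
      field_simp
      ring
    · simp only [c, if_true, Nat.cast_succ, Nat.succ_ne_zero, if_false, le_refl,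
        Nat.not_succ_le_self]
      field_simp
      ring
    · intro τ hτs hτt
      have hτ0 : (τ : ℕ) ≠ 0 := fun h => hτs (Fin.ext h)
      have hτk : (τ : ℕ) ≠ k + 1 := fun h => hτt (Fin.ext h)
      simp only [c, hτ0, if_false]
      split_ifs <;> first | rfl | omega
  have hchain : ∀ k, k < r →
      linFormC A (mixRoots p P W (c 0)) ≤ linFormC A (mixRoots p P W (c k)) := by
    intro k hk
    induction k with
    | zero => exact le_rfl
    | succ k ih => exact (ih (by omega)).trans (hstep k hk)
  have hfirst : c 0 = fun t : Fin r => if (t : ℕ) = 0 then (1 : ℝ) else 0 := by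
    ext t
    simp only [c, Nat.cast_zero, sub_zero, div_self hr'.ne', nonpos_iff_eq_zero]
    split_ifs <;> rfl
  have hlast : c (r - 1) = fun _ => (r : ℝ)⁻¹ := by
    ext t
    simp only [c, Nat.cast_sub hr, Nat.cast_one, sub_sub_cancel, one_div,
      Nat.le_sub_one_iff_lt hr, t.isLt]
    split_ifs <;> rfl
  simpa only [hfirst, hlast] using hchain (r - 1) (by omega)

end Interpolation

theorem sliceSum_nonneg {r n : ℕ} (hr : 0 < r) {A : (Fin r → Fin n) → ℝ} (hA : ∀ i, 0 ≤ A i)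
    (a : Fin n) : 0 ≤ sliceSum hr A a :=
  sum_nonneg fun i _ => by split_ifs; exacts [hA i, le_rfl]

theorem linFormC_single_slot {r n : ℕ} (hr : 0 < r) (A : (Fin r → Fin n) → ℝ)
    (x : Fin n → ℝ) (y : ℝ) :
    linFormC A (fun t : Fin r => if (t : ℕ) = 0 then x else fun _ => y) =
      y ^ (r - 1) * ∑ a, sliceSum hr A a * x a := by
  have hprod : ∀ i : Fin r → Fin n,
      ∏ t : Fin r, (if (t : ℕ) = 0 then x else fun _ => y) (i t) = x (i ⟨0, hr⟩) * y ^ (r - 1) := by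
    intro i
    rw [← mul_prod_erase _ _ (mem_univ ⟨0, hr⟩), if_pos rfl,
      prod_congr rfl fun t ht => by rw [if_neg fun h => ne_of_mem_erase ht (Fin.ext h)],
      prod_const, card_erase_of_mem (mem_univ _), card_univ, Fintype.card_fin]
  simp only [linFormC, sliceSum, hprod, mul_sum, sum_mul]
  rw [sum_comm]
  refine sum_congr rfl fun i _ => ?_
  simp only [ite_mul, zero_mul, mul_ite, mul_zero, sum_ite_eq, mem_univ, if_true]
  ring

theorem sum_mul_rpow_div_eq {n : ℕ} {p : ℝ} (hp : 1 < p) {S : Fin n → ℝ} (hS : ∀ a, 0 ≤ S a)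
    (hT : 0 < ∑ a, S a ^ (p / (p - 1))) :
    ∑ a, S a * (S a ^ (p / (p - 1)) / ∑ b, S b ^ (p / (p - 1))) ^ p⁻¹ =
      (∑ a, S a ^ (p / (p - 1))) ^ ((p - 1) / p) := by
  set T := ∑ b, S b ^ (p / (p - 1))
  have hp₁ : p - 1 ≠ 0 := by linarith
  have hterm : ∀ a, S a * (S a ^ (p / (p - 1))) ^ p⁻¹ = S a ^ (p / (p - 1)) := by
    intro a
    rw [← Real.rpow_mul (hS a), ← Real.rpow_one_add' (hS a) (by positivity)]
    congr 1
    field_simp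
    ring
  simp only [Real.div_rpow (Real.rpow_nonneg (hS _) _) hT.le, ← mul_div_assoc, hterm,
    ← sum_div]
  rw [show (p - 1) / p = 1 - p⁻¹ by field_simp, Real.rpow_sub hT, Real.rpow_one]

theorem rpow_one_sub_div_mul_rpow_eq {x p T : ℝ} (hx : 0 < x) (hT : 0 ≤ T) (hp : p ≠ 0)
    {r : ℕ} (hr : 0 < r) :
    x ^ (1 - (r : ℝ) / p) * ((1 / x) * T) ^ ((p - 1) / p) =
      (x⁻¹ ^ p⁻¹) ^ (r - 1) * T ^ ((p - 1) / p) := by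
  rw [Real.mul_rpow (by positivity) hT, ← mul_assoc]
  congr 1
  rw [one_div, Real.inv_rpow hx.le, Real.inv_rpow hx.le, inv_pow, ← Real.rpow_natCast,
    ← Real.rpow_mul hx.le, ← Real.rpow_neg hx.le, ← Real.rpow_neg hx.le, ← Real.rpow_add hx,
    Nat.cast_pred hr]
  congr 1
  field_simp
  ring

/-- For a symmetric nonnegative `r`-matrix `A` of order `n` with slice-sums
`S₁, …, S_n` and `p ≥ 2`:
`ρ⁽ᵖ⁾(A) ≥ n^{1-r/p} ((S₁^{p/(p-1)} + ⋯ + S_n^{p/(p-1)})/n)^{(p-1)/p}`. -/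
theorem pSpecRad_lower_bound_sliceSums {r n : ℕ} (hr : 2 ≤ r) {p : ℝ} (hp : 2 ≤ p)
    (A : (Fin r → Fin n) → ℝ) (hA : ∀ i, 0 ≤ A i)
    (hsym : ∀ (σ : Equiv.Perm (Fin r)) (i : Fin r → Fin n), A (i ∘ σ) = A i) :
    (n : ℝ) ^ (1 - (r : ℝ) / p) *
        ((1 / (n : ℝ)) * ∑ a, sliceSum (by omega) A a ^ (p / (p - 1))) ^ ((p - 1) / p)
      ≤ pSpecRad p A := by
  have hr₀ : 0 < r := by omega
  set S := sliceSum hr₀ A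
  set T := ∑ a, S a ^ (p / (p - 1))
  have hS : ∀ a, 0 ≤ S a := sliceSum_nonneg hr₀ hA
  obtain hT₀ | hT : 0 = T ∨ 0 < T := (sum_nonneg fun a _ => Real.rpow_nonneg (hS a) _).eq_or_lt
  · rw [← hT₀, mul_zero, Real.zero_rpow (div_pos (by linarith) (by linarith)).ne', mul_zero]
    exact pSpecRad_nonneg A
  obtain ⟨a₀, -, -⟩ := exists_ne_zero_of_sum_ne_zero hT.ne'
  have hn : (0 : ℝ) < n := Nat.cast_pos.2 a₀.pos
  set P : Fin n → ℝ := fun a => S a ^ (p / (p - 1)) / T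
  have hP : ∀ a, 0 ≤ P a := fun a => div_nonneg (Real.rpow_nonneg (hS a) _) hT.le
  have hP₁ : ∑ a, P a = 1 := by rw [← sum_div, div_self hT.ne']
  have hW : ∀ _ : Fin n, 0 ≤ (n : ℝ)⁻¹ := fun _ => inv_nonneg.2 hn.le
  have hW₁ : ∑ _ : Fin n, (n : ℝ)⁻¹ = 1 := by simp [hn.ne']
  have hr' : (r : ℝ)⁻¹ ∈ Set.Icc 0 1 :=
    ⟨by positivity, inv_le_one_of_one_le₀ (Nat.one_le_cast.2 hr₀)⟩
  calc _ = ((n : ℝ)⁻¹ ^ p⁻¹) ^ (r - 1) * ∑ a, S a * P a ^ p⁻¹ := by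
        rw [sum_mul_rpow_div_eq (by linarith) hS hT,
          rpow_one_sub_div_mul_rpow_eq hn hT.le (by linarith) hr₀]
    _ = linFormC A (mixRoots p P (fun _ => (n : ℝ)⁻¹) fun t => if (t : ℕ) = 0 then 1 else 0) := by
        rw [mixRoots_ite_zero, linFormC_single_slot hr₀]
    _ ≤ linFormC A (mixRoots p P (fun _ => (n : ℝ)⁻¹) fun _ => (r : ℝ)⁻¹) :=
        linFormC_mixRoots_le_uniform hA hsym hp hP hW
    _ ≤ pSpecRad p A := (le_abs_self _).trans (abs_linFormC_le_pSpecRad (by linarith) A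
        (lpNorm_rpow_inv_eq_one (by linarith) (mix_nonneg hP hW hr')
          (sum_mix_eq_one hP₁ hW₁ _)))
end
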